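/- For every even natural number N > 6, the restricted correlation sum over non-coprime decompositions satisfies the lower bound ∑_{1 ≤ n ≤ N−1, gcd(n, N−n) > 1} Υ(n) · Υ(N − n) ≥ ∑_{p prime, p ∣ N} ∑_{1 ≤ n ≤ N/p − 1} Λ₀(n) · Λ₀(N/p − n). -/

import Mathlib

open scoped Classical
open Finset Real

/-- The master function `Υ`: `Υ(n) = log p` if `n = p²` for a prime `p` (note then
`p = √n`), `Υ(n) = log(p₁p₂)` if `n = p₁p₂` for distinct primes `p₁, p₂`, and
`Υ(n) = 0` otherwise. -/
noncomputable def Upsilon (n : ℕ) : ℝ :=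
  if ∃ p : ℕ, p.Prime ∧ n = p ^ 2 then Real.log (Nat.sqrt n)
  else if ∃ p₁ p₂ : ℕ, p₁.Prime ∧ p₂.Prime ∧ p₁ ≠ p₂ ∧ n = p₁ * p₂ then Real.log n
  else 0

/-- The truncated von Mangoldt function: `Λ₀(n) = log n` if `n` is prime, else `0`. -/
noncomputable def Lambda0 (n : ℕ) : ℝ := if n.Prime then Real.log n else 0

/-!
Writing `n = m / p` for the multiples `m` of `p`, the right-hand side becomes
`∑_m ∑_{p ∣ N, p ∣ m} Λ₀(m/p) Λ₀((N-m)/p)`, and every `m` that occurs has `p ∣ gcd(m, N-m)`.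
For fixed `m`, `Λ₀((N-m)/p) ≤ Υ(N-m)` since `N - m = p · ((N-m)/p)`, and
`∑_{p ∣ m} Λ₀(m/p) ≤ Υ(m)`: the sum vanishes unless `m = p²` or `m = p₁p₂`,
where it equals `log p` resp. `log p₁ + log p₂`.
-/

lemma Lambda0_nonneg (n : ℕ) : 0 ≤ Lambda0 n := by
  unfold Lambda0
  split_ifs with hn
  · exact Real.log_nonneg (by exact_mod_cast hn.one_lt.le)
  · rfl

lemma Lambda0_prime {p : ℕ} (hp : p.Prime) : Lambda0 p = Real.log p := if_pos hp

lemma Upsilon_prime_sq {p : ℕ} (hp : p.Prime) : Upsilon (p ^ 2) = Real.log p := by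
  rw [Upsilon, if_pos ⟨p, hp, rfl⟩, Nat.sqrt_eq']

lemma not_exists_prime_sq_eq_mul {p q : ℕ} (hp : p.Prime) (hq : q.Prime) (hpq : p ≠ q) :
    ¬ ∃ r : ℕ, r.Prime ∧ p * q = r ^ 2 := by
  rintro ⟨r, hr, h⟩
  have hpr : p = r :=
    (Nat.prime_dvd_prime_iff_eq hp hr).1 (hp.dvd_of_dvd_pow (h ▸ dvd_mul_right p q))
  have hqr : q = r :=
    (Nat.prime_dvd_prime_iff_eq hq hr).1 (hq.dvd_of_dvd_pow (h ▸ dvd_mul_left q p))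
  exact hpq (hpr.trans hqr.symm)

lemma Upsilon_mul_of_ne {p q : ℕ} (hp : p.Prime) (hq : q.Prime) (hpq : p ≠ q) :
    Upsilon (p * q) = Real.log p + Real.log q := by
  rw [Upsilon, if_neg (not_exists_prime_sq_eq_mul hp hq hpq), if_pos ⟨p, q, hp, hq, hpq, rfl⟩,
    Nat.cast_mul, Real.log_mul (by exact_mod_cast hp.ne_zero) (by exact_mod_cast hq.ne_zero)]

lemma Upsilon_nonneg (n : ℕ) : 0 ≤ Upsilon n := by
  unfold Upsilon
  split_ifs with hsq hpq
  · obtain ⟨p, hp, rfl⟩ := hsq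
    rw [Nat.sqrt_eq']
    exact Real.log_nonneg (by exact_mod_cast hp.one_lt.le)
  · obtain ⟨p, q, hp, hq, -, rfl⟩ := hpq
    exact Real.log_nonneg (by exact_mod_cast Nat.mul_pos hp.pos hq.pos)
  · rfl

lemma Lambda0_div_le_Upsilon {p n : ℕ} (hp : p.Prime) (hpn : p ∣ n) :
    Lambda0 (n / p) ≤ Upsilon n := by
  obtain ⟨q, rfl⟩ := hpn
  rw [Nat.mul_div_cancel_left q hp.pos]
  by_cases hq : q.Prime
  · rw [Lambda0_prime hq]
    by_cases hpq : p = q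
    · rw [← hpq, ← sq, Upsilon_prime_sq hp]
    · rw [Upsilon_mul_of_ne hp hq hpq]
      linarith [Real.log_nonneg (show (1 : ℝ) ≤ p by exact_mod_cast hp.one_lt.le)]
  · rw [Lambda0, if_neg hq]
    exact Upsilon_nonneg _

lemma sum_primeFactors_Lambda0_div_le_Upsilon (m : ℕ) :
    ∑ p ∈ m.primeFactors, Lambda0 (m / p) ≤ Upsilon m := by
  by_cases hsq : ∃ p : ℕ, p.Prime ∧ m = p ^ 2
  · obtain ⟨p, hp, rfl⟩ := hsq
    rw [Nat.primeFactors_prime_pow two_ne_zero hp, sum_singleton, Upsilon_prime_sq hp,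
      sq, Nat.mul_div_cancel _ hp.pos, Lambda0_prime hp]
  by_cases hpq : ∃ p₁ p₂ : ℕ, p₁.Prime ∧ p₂.Prime ∧ p₁ ≠ p₂ ∧ m = p₁ * p₂
  · obtain ⟨p, q, hp, hq, hpq, rfl⟩ := hpq
    rw [Nat.primeFactors_mul hp.ne_zero hq.ne_zero, hp.primeFactors, hq.primeFactors,
      ← insert_eq, sum_pair hpq, Nat.mul_div_cancel_left q hp.pos, Nat.mul_div_cancel p hq.pos,
      Lambda0_prime hp, Lambda0_prime hq, Upsilon_mul_of_ne hp hq hpq, add_comm]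
  · have hzero : ∀ p ∈ m.primeFactors, Lambda0 (m / p) = 0 := by
      intro p hpm
      obtain ⟨hp, hpm, -⟩ := Nat.mem_primeFactors.1 hpm
      have hm : m = p * (m / p) := (Nat.mul_div_cancel' hpm).symm
      refine if_neg fun hq => ?_
      by_cases hpq' : p = m / p
      · exact hsq ⟨p, hp, by rw [hm, ← hpq', sq]⟩
      · exact hpq ⟨p, m / p, hp, hq, hpq', hm⟩
    rw [sum_eq_zero hzero]
    exact Upsilon_nonneg m

lemma sum_Icc_div_eq_sum_filter_dvd {M : Type*} [AddCommMonoid M] (f : ℕ → ℕ → M)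
    {p N : ℕ} (hp : 0 < p) (hpN : p ∣ N) :
    ∑ n ∈ Icc 1 (N / p - 1), f n (N / p - n) =
      ∑ m ∈ Icc 1 (N - 1) with p ∣ m, f (m / p) ((N - m) / p) := by
  obtain ⟨k, rfl⟩ := hpN
  rw [Nat.mul_div_cancel_left k hp]
  refine sum_nbij' (p * ·) (· / p) (fun n hn => ?_) (fun m hm => ?_) (fun n _ => ?_)
    (fun m hm => ?_) (fun n _ => ?_)
  · simp only [mem_Icc, mem_filter] at hn ⊢
    have : p * n + p ≤ p * k := by rw [← mul_add_one]; exact Nat.mul_le_mul_left p (by omega)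
    exact ⟨⟨Nat.mul_pos hp hn.1, by omega⟩, dvd_mul_right p n⟩
  · simp only [mem_Icc, mem_filter] at hm ⊢
    obtain ⟨⟨hm1, hmk⟩, j, rfl⟩ := hm
    rw [Nat.mul_div_cancel_left j hp]
    have : j < k := lt_of_mul_lt_mul_left (show p * j < p * k by omega) p.zero_le
    exact ⟨Nat.one_le_iff_ne_zero.2 (by rintro rfl; simp at hm1), by omega⟩
  · exact Nat.mul_div_cancel_left n hp
  · exact Nat.mul_div_cancel' (mem_filter.1 hm).2
  · rw [Nat.mul_div_cancel_left n hp, ← Nat.mul_sub, Nat.mul_div_cancel_left _ hp]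

lemma one_lt_gcd_sub_of_prime_dvd {p m N : ℕ} (hp : p.Prime) (hpN : p ∣ N) (hpm : p ∣ m)
    (hm : m ≠ 0) : 1 < Nat.gcd m (N - m) :=
  hp.one_lt.trans_le <|
    Nat.le_of_dvd (Nat.gcd_pos_of_pos_left _ (Nat.pos_of_ne_zero hm))
      (Nat.dvd_gcd hpm (Nat.dvd_sub hpN hpm))

lemma sum_Lambda0_mul_Lambda0_le_Upsilon_mul_Upsilon (N : ℕ) {m : ℕ} (hm : m ≠ 0) :
    ∑ p ∈ N.primeFactors with p ∣ m, Lambda0 (m / p) * Lambda0 ((N - m) / p) ≤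
      Upsilon m * Upsilon (N - m) :=
  calc ∑ p ∈ N.primeFactors with p ∣ m, Lambda0 (m / p) * Lambda0 ((N - m) / p)
      ≤ ∑ p ∈ N.primeFactors with p ∣ m, Lambda0 (m / p) * Upsilon (N - m) := by
        refine sum_le_sum fun p hp => mul_le_mul_of_nonneg_left ?_ (Lambda0_nonneg _)
        obtain ⟨hpN, hpm⟩ := mem_filter.1 hp
        exact Lambda0_div_le_Upsilon (Nat.prime_of_mem_primeFactors hpN)
          (Nat.dvd_sub (Nat.dvd_of_mem_primeFactors hpN) hpm)
    _ ≤ (∑ p ∈ m.primeFactors, Lambda0 (m / p)) * Upsilon (N - m) := by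
        rw [← sum_mul]
        refine mul_le_mul_of_nonneg_right (sum_le_sum_of_subset_of_nonneg (fun p hp => ?_)
          fun _ _ _ => Lambda0_nonneg _) (Upsilon_nonneg _)
        obtain ⟨hpN, hpm⟩ := mem_filter.1 hp
        exact Nat.mem_primeFactors.2 ⟨Nat.prime_of_mem_primeFactors hpN, hpm, hm⟩
    _ ≤ Upsilon m * Upsilon (N - m) :=
        mul_le_mul_of_nonneg_right (sum_primeFactors_Lambda0_div_le_Upsilon m) (Upsilon_nonneg _)

theorem upsilon_noncoprime_correlation_lower_bound_general (N : ℕ) :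
    ∑ n ∈ (Finset.Icc 1 (N - 1)).filter (fun n => 1 < Nat.gcd n (N - n)),
        Upsilon n * Upsilon (N - n) ≥
      ∑ p ∈ N.primeFactors, ∑ n ∈ Finset.Icc 1 (N / p - 1),
        Lambda0 n * Lambda0 (N / p - n) := by
  have hreindex : ∀ p ∈ N.primeFactors,
      ∑ n ∈ Icc 1 (N / p - 1), Lambda0 n * Lambda0 (N / p - n) =
        ∑ m ∈ Icc 1 (N - 1) with p ∣ m, Lambda0 (m / p) * Lambda0 ((N - m) / p) :=
    fun p hp => sum_Icc_div_eq_sum_filter_dvd (fun a b => Lambda0 a * Lambda0 b)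
      (Nat.prime_of_mem_primeFactors hp).pos (Nat.dvd_of_mem_primeFactors hp)
  rw [sum_congr rfl hreindex, sum_comm' (t' := {m ∈ Icc 1 (N - 1) | 1 < Nat.gcd m (N - m)})
    (s' := fun m => {p ∈ N.primeFactors | p ∣ m})]
  · exact sum_le_sum fun m hm =>
      sum_Lambda0_mul_Lambda0_le_Upsilon_mul_Upsilon N (by simp only [mem_filter, mem_Icc] at hm; omega)
  · intro p m
    simp only [mem_filter, mem_Icc]
    constructor
    · rintro ⟨hp, hm, hpm⟩
      exact ⟨⟨hp, hpm⟩, hm, one_lt_gcd_sub_of_prime_dvd (Nat.prime_of_mem_primeFactors hp)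
        (Nat.dvd_of_mem_primeFactors hp) hpm (by omega)⟩
    · rintro ⟨⟨hp, hpm⟩, hm, -⟩
      exact ⟨hp, hm, hpm⟩

/-- For every even `N > 6`,
`∑_{1 ≤ n ≤ N−1, gcd(n, N−n) > 1} Υ(n)·Υ(N−n) ≥ ∑_{p ∣ N prime} ∑_{1 ≤ n ≤ N/p−1} Λ₀(n)·Λ₀(N/p−n)`. -/
theorem upsilon_noncoprime_correlation_lower_bound (N : ℕ) (hN : Even N)
    (hN6 : 6 < N) :
    ∑ n ∈ (Finset.Icc 1 (N - 1)).filter (fun n => 1 < Nat.gcd n (N - n)),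
        Upsilon n * Upsilon (N - n) ≥
      ∑ p ∈ N.primeFactors, ∑ n ∈ Finset.Icc 1 (N / p - 1),
        Lambda0 n * Lambda0 (N / p - n) :=
  upsilon_noncoprime_correlation_lower_bound_general N
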